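/- Let T ≥ 2, let α ∈ (0,1), let σ : {1,...,T} → {1,...,T} be a bijection, and let T_1,...,T_T be random perishing times with finite means and variances. Suppose: (1) E[T_b] > min{T, ⌈σ(b)/(1 − T^{−α})⌉} for every b, and (2) Σ_{b=1}^T Var(T_b)/(E[T_b] − min{T, ⌈σ(b)/(1 − T^{−α})⌉})² ≤ (1/2)·T^{1−α}. Then for any δ with 3 log(T)·exp(−T^{1−α}/8) ≤ δ < 1, the maximal feasible static allocation satisfies X̲ ≥ 1 − T^{−α}; consequently the perishing-induced loss satisfies ℒ^perish ≤ T^{−α}. -/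

import Mathlib

/-! With `X₀ = 1 - T^{-α}` and `K = T^{1-α} = T - X₀ T`, it suffices to show that `X₀` is
feasible, i.e. `Δ̄(X₀) ≤ K`. One-sided Chebyshev bounds each spoilage probability at `X₀` by
`Var(T_b)/(E[T_b] - min{T, ⌈σ(b)/X₀⌉})²`, so `μ(X₀) ≤ K/2`; the lower bound on `δ` gives
`L = log(3 log T/δ) ≤ K/8`, whence `Conf^P_1(μ(X₀)) ≤ (K/8 + 3K/4)/2 < K/2`. -/

open MeasureTheory ProbabilityTheory Finset

/-- Worst-case expected spoilage under the static allocation `X`: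
`μX(X) = Σ_b P(Tb b < min{T, τ_b(1 ∣ X, σ)})`, where `τ_b(1 ∣ X, σ) = ⌈σ(b)/X⌉` is the
latest possible allocation time of unit `b` (one deterministic arrival per round). -/
noncomputable def muX {Ω : Type*} [MeasurableSpace Ω] (μ : Measure Ω) (T : ℕ)
    (rank : Fin T → ℕ) (Tb : Fin T → Ω → ℕ) (X : ℝ) : ℝ :=
  ∑ b : Fin T, (μ {ω | Tb b ω < min T ⌈(rank b : ℝ) / X⌉₊}).toReal

/-- The confidence term `Conf^P_1(m) = (1/2)(log(3 log T/δ) + √(log²(3 log T/δ) + 8 m log(3 log T/δ)))`. -/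
noncomputable def confP (T : ℕ) (δ m : ℝ) : ℝ :=
  (1 / 2) * (Real.log (3 * Real.log T / δ) +
    Real.sqrt ((Real.log (3 * Real.log T / δ)) ^ 2 + 8 * m * Real.log (3 * Real.log T / δ)))

/-- The worst-case perishing loss `Δ̄(X) = min{B, μX(X) + Conf^P_1(μX(X))}` (here `B = T`). -/
noncomputable def deltaBar {Ω : Type*} [MeasurableSpace Ω] (μ : Measure Ω) (T : ℕ)
    (rank : Fin T → ℕ) (Tb : Fin T → Ω → ℕ) (δ X : ℝ) : ℝ :=
  min (T : ℝ) (muX μ T rank Tb X + confP T δ (muX μ T rank Tb X))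

/-- The maximal feasible static allocation
`X̲ = sup{X ≥ 0 ∣ X ≤ (T − Δ̄(X))/T}` (with `B = T` and `N̄ = T`). -/
noncomputable def Xlower {Ω : Type*} [MeasurableSpace Ω] (μ : Measure Ω) (T : ℕ)
    (rank : Fin T → ℕ) (Tb : Fin T → Ω → ℕ) (δ : ℝ) : ℝ :=
  sSup {X : ℝ | 0 ≤ X ∧ X ≤ ((T : ℝ) - deltaBar μ T rank Tb δ X) / (T : ℝ)}

theorem measureReal_lt_le_variance_div_sq {Ω : Type*} [MeasurableSpace Ω] {μ : Measure Ω}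
    [IsFiniteMeasure μ] {X : Ω → ℝ} (hX : MemLp X 2 μ) {c : ℝ} (hc : c < μ[X]) :
    μ.real {ω | X ω < c} ≤ variance X μ / (μ[X] - c) ^ 2 := by
  have hsub : {ω | X ω < c} ⊆ {ω | μ[X] - c ≤ |X ω - μ[X]|} := fun ω (hω : X ω < c) => by
    rw [Set.mem_ofPred_eq, abs_sub_comm]
    exact (by linarith : μ[X] - c ≤ μ[X] - X ω).trans (le_abs_self _)
  exact ENNReal.toReal_le_of_le_ofReal (div_nonneg (variance_nonneg _ _) (sq_nonneg _))
    ((measure_mono hsub).trans (meas_ge_le_variance_div_sq hX (sub_pos.mpr hc)))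

section Spoilage

variable {Ω : Type*} [MeasurableSpace Ω] (μ : Measure Ω) (T : ℕ) (rank : Fin T → ℕ)
  (Tb : Fin T → Ω → ℕ)

theorem muX_nonneg (X : ℝ) : 0 ≤ muX μ T rank Tb X :=
  sum_nonneg fun _ _ => ENNReal.toReal_nonneg

theorem muX_le_sum_variance_div_sq [IsFiniteMeasure μ] {X : ℝ}
    (hL2 : ∀ b, MemLp (fun ω => (Tb b ω : ℝ)) 2 μ)
    (hroom : ∀ b, ((min T ⌈(rank b : ℝ) / X⌉₊ : ℕ) : ℝ) < ∫ ω, (Tb b ω : ℝ) ∂μ) :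
    muX μ T rank Tb X ≤ ∑ b, variance (fun ω => (Tb b ω : ℝ)) μ /
      ((∫ ω, (Tb b ω : ℝ) ∂μ) - ((min T ⌈(rank b : ℝ) / X⌉₊ : ℕ) : ℝ)) ^ 2 := by
  refine sum_le_sum fun b _ => ?_
  have hcast : {ω | Tb b ω < min T ⌈(rank b : ℝ) / X⌉₊} =
      {ω | (Tb b ω : ℝ) < ((min T ⌈(rank b : ℝ) / X⌉₊ : ℕ) : ℝ)} := by
    simp only [Nat.cast_lt]
  rw [hcast]
  exact measureReal_lt_le_variance_div_sq (hL2 b) (hroom b)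

end Spoilage

theorem confP_nonneg {T : ℕ} {δ : ℝ} (hL : 0 ≤ Real.log (3 * Real.log T / δ)) (m : ℝ) :
    0 ≤ confP T δ m := by
  unfold confP
  have := Real.sqrt_nonneg
    (Real.log (3 * Real.log T / δ) ^ 2 + 8 * m * Real.log (3 * Real.log T / δ))
  positivity

theorem add_confP_le {T : ℕ} {δ m K : ℝ} (hL : 0 ≤ Real.log (3 * Real.log T / δ))
    (hLK : Real.log (3 * Real.log T / δ) ≤ K / 8) (hm : 0 ≤ m) (hmK : m ≤ K / 2) :
    m + confP T δ m ≤ K := by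
  unfold confP
  set L := Real.log (3 * Real.log T / δ)
  have hK : 0 ≤ K := by linarith
  have hsq : L ^ 2 + 8 * m * L ≤ (3 * K / 4) ^ 2 := by
    nlinarith [mul_le_mul hLK hLK hL (by positivity), mul_le_mul hmK hLK hL (by positivity)]
  have hsqrt : Real.sqrt (L ^ 2 + 8 * m * L) ≤ 3 * K / 4 :=
    Real.sqrt_le_iff.mpr ⟨by positivity, hsq⟩
  linarith

theorem deltaBar_nonneg {Ω : Type*} [MeasurableSpace Ω] (μ : Measure Ω) (T : ℕ)
    (rank : Fin T → ℕ) (Tb : Fin T → Ω → ℕ) {δ : ℝ}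
    (hL : 0 ≤ Real.log (3 * Real.log T / δ)) (X : ℝ) :
    0 ≤ deltaBar μ T rank Tb δ X :=
  le_min (Nat.cast_nonneg T)
    (add_nonneg (muX_nonneg μ T rank Tb X) (confP_nonneg hL _))

theorem le_Xlower {Ω : Type*} [MeasurableSpace Ω] {μ : Measure Ω} {T : ℕ}
    {rank : Fin T → ℕ} {Tb : Fin T → Ω → ℕ} {δ X : ℝ}
    (hL : 0 ≤ Real.log (3 * Real.log T / δ)) (hX0 : 0 ≤ X)
    (hX : X ≤ ((T : ℝ) - deltaBar μ T rank Tb δ X) / T) :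
    X ≤ Xlower μ T rank Tb δ := by
  refine le_csSup ⟨1, fun Y ⟨_, hY⟩ => hY.trans ?_⟩ ⟨hX0, hX⟩
  exact div_le_one_of_le₀ (by linarith [deltaBar_nonneg μ T rank Tb hL Y]) (Nat.cast_nonneg T)

theorem Real.log_div_le_of_mul_exp_neg_le {a c δ : ℝ} (ha : 0 < a)
    (h : a * Real.exp (-c) ≤ δ) : Real.log (a / δ) ≤ c := by
  have hδ : 0 < δ := (mul_pos ha (Real.exp_pos _)).trans_le h
  rw [Real.log_le_iff_le_exp (div_pos ha hδ), div_le_iff₀ hδ]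
  calc a = a * Real.exp (-c) * Real.exp c := by rw [mul_assoc, ← Real.exp_add]; simp
    _ ≤ δ * Real.exp c := by gcongr
    _ = Real.exp c * δ := mul_comm _ _

theorem one_le_three_mul_log {T : ℕ} (hT : 2 ≤ T) : 1 ≤ 3 * Real.log T := by
  have h2 : Real.log 2 ≤ Real.log T := Real.log_le_log (by norm_num) (by exact_mod_cast hT)
  linarith [Real.log_two_gt_d9]

theorem stmt13_general {Ω : Type*} [MeasurableSpace Ω] (μ : Measure Ω) [IsProbabilityMeasure μ]
    (T : ℕ) (hT : 2 ≤ T) (α : ℝ) (hα : α ∈ Set.Ioo (0 : ℝ) 1)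
    (σ : Equiv.Perm (Fin T))
    (Tb : Fin T → Ω → ℕ)
    (hL2 : ∀ b, MemLp (fun ω => (Tb b ω : ℝ)) 2 μ)
    (hroom : ∀ b : Fin T,
      ((min T ⌈(((σ b : ℕ) + 1 : ℕ) : ℝ) / (1 - (T : ℝ) ^ (-α))⌉₊ : ℕ) : ℝ)
        < ∫ ω, (Tb b ω : ℝ) ∂μ)
    (hvar : ∑ b : Fin T,
        variance (fun ω => (Tb b ω : ℝ)) μ /
          ((∫ ω, (Tb b ω : ℝ) ∂μ) -
            ((min T ⌈(((σ b : ℕ) + 1 : ℕ) : ℝ) / (1 - (T : ℝ) ^ (-α))⌉₊ : ℕ) : ℝ)) ^ 2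
      ≤ (1 / 2) * (T : ℝ) ^ ((1 : ℝ) - α))
    (δ : ℝ) (hδlow : 3 * Real.log T * Real.exp (-(T : ℝ) ^ ((1 : ℝ) - α) / 8) ≤ δ)
    (hδhigh : δ < 1) :
    1 - (T : ℝ) ^ (-α) ≤ Xlower μ T (fun b => (σ b : ℕ) + 1) Tb δ ∧
    1 - Xlower μ T (fun b => (σ b : ℕ) + 1) Tb δ ≤ (T : ℝ) ^ (-α) := by
  have hT1 : (1 : ℝ) < T := by exact_mod_cast hT
  set K := (T : ℝ) ^ ((1 : ℝ) - α) with hK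
  have hX₀T : (1 - (T : ℝ) ^ (-α)) * T = T - K := by
    rw [hK, sub_eq_add_neg 1 α, Real.rpow_add (by linarith), Real.rpow_one]; ring
  have hX₀ : 0 ≤ 1 - (T : ℝ) ^ (-α) :=
    sub_nonneg.mpr (Real.rpow_le_one_of_one_le_of_nonpos hT1.le (by linarith [hα.1]))
  have h3log := one_le_three_mul_log hT
  have hLK : Real.log (3 * Real.log T / δ) ≤ K / 8 :=
    Real.log_div_le_of_mul_exp_neg_le (by linarith) (by rwa [← neg_div])
  have hδ : 0 < δ := (mul_pos (by linarith) (Real.exp_pos _)).trans_le hδlow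
  have hL : 0 ≤ Real.log (3 * Real.log T / δ) :=
    Real.log_nonneg ((one_le_div hδ).mpr (by linarith))
  have hmuK : muX μ T (fun b => (σ b : ℕ) + 1) Tb (1 - (T : ℝ) ^ (-α)) ≤ K / 2 :=
    (muX_le_sum_variance_div_sq μ T _ Tb hL2 hroom).trans (by linarith)
  have hΔ : deltaBar μ T (fun b => (σ b : ℕ) + 1) Tb δ (1 - (T : ℝ) ^ (-α)) ≤ K :=
    (min_le_right _ _).trans (add_confP_le hL hLK (muX_nonneg ..) hmuK)
  have hfeasible := le_Xlower hL hX₀ (by rw [le_div_iff₀ (by linarith)]; linarith)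
  exact ⟨hfeasible, by linarith⟩

/-- Let `T ≥ 2`, `α ∈ (0,1)`, `σ` a bijection of the units (allocation
schedule, `rank b = (σ b) + 1 ∈ {1,…,T}`), and `Tb b` random perishing times with finite
means and variances. If (1) `E[Tb b] > min{T, ⌈σ(b)/(1 − T^{−α})⌉}` for every `b`, and
(2) `Σ_b Var(Tb b)/(E[Tb b] − min{T, ⌈σ(b)/(1 − T^{−α})⌉})² ≤ (1/2)·T^{1−α}`, then for any
`δ` with `3 log(T)·exp(−T^{1−α}/8) ≤ δ < 1`, the maximal feasible static allocation
satisfies `X̲ ≥ 1 − T^{−α}`; consequently the perishing-induced loss satisfies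
`ℒ^perish = 1 − X̲ ≤ T^{−α}`. -/
theorem stmt13 {Ω : Type*} [MeasurableSpace Ω] (μ : Measure Ω) [IsProbabilityMeasure μ]
    (T : ℕ) (hT : 2 ≤ T) (α : ℝ) (hα : α ∈ Set.Ioo (0 : ℝ) 1)
    (σ : Equiv.Perm (Fin T))
    (Tb : Fin T → Ω → ℕ) (hmeas : ∀ b, Measurable (Tb b))
    (hL2 : ∀ b, MemLp (fun ω => (Tb b ω : ℝ)) 2 μ)
    (hroom : ∀ b : Fin T,
      ((min T ⌈(((σ b : ℕ) + 1 : ℕ) : ℝ) / (1 - (T : ℝ) ^ (-α))⌉₊ : ℕ) : ℝ)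
        < ∫ ω, (Tb b ω : ℝ) ∂μ)
    (hvar : ∑ b : Fin T,
        variance (fun ω => (Tb b ω : ℝ)) μ /
          ((∫ ω, (Tb b ω : ℝ) ∂μ) -
            ((min T ⌈(((σ b : ℕ) + 1 : ℕ) : ℝ) / (1 - (T : ℝ) ^ (-α))⌉₊ : ℕ) : ℝ)) ^ 2
      ≤ (1 / 2) * (T : ℝ) ^ ((1 : ℝ) - α))
    (δ : ℝ) (hδlow : 3 * Real.log T * Real.exp (-(T : ℝ) ^ ((1 : ℝ) - α) / 8) ≤ δ)
    (hδhigh : δ < 1) :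
    1 - (T : ℝ) ^ (-α) ≤ Xlower μ T (fun b => (σ b : ℕ) + 1) Tb δ ∧
    1 - Xlower μ T (fun b => (σ b : ℕ) + 1) Tb δ ≤ (T : ℝ) ^ (-α) :=
  stmt13_general μ T hT α hα σ Tb hL2 hroom hvar δ hδlow hδhigh
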